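/- arXiv:math/0601068 — 2 statements merged into one kernel-verified Lean document; each statement's English description precedes it below -/
import Mathlib

section
/- The primitive part of the free infinite magmatic algebra Mag^∞(V) on a vector space V is exactly V: Prim Mag^∞(V) = Mag_1 ⊗ V, the span of single-leaf labelled trees. -/
open scoped TensorProduct PiTensorProduct

noncomputable section

/-- Planar rooted trees: a leaf, or the grafting of `k + 2` trees onto a new root. -/
inductive PTree : Type
  | leaf : PTree
  | graft : (k : ℕ) → (Fin (k + 2) → PTree) → PTree

namespace PTree

/-- Number of leaves of a planar rooted tree. -/
@[reducible] noncomputable def leaves (t : PTree) : ℕ :=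
  PTree.rec 1 (fun _ _ ih => ∑ i, ih i) t

/-- The `n`-corolla (with `n = k + 2` leaves). -/
def corolla (k : ℕ) : PTree := .graft k fun _ => .leaf

/-- Height of a planar rooted tree: the maximal number of internal vertices on a
path from the root to a leaf (so the leaf `|` has height 0 and the corollas have
height 1). -/
@[reducible] noncomputable def height (t : PTree) : ℕ :=
  PTree.rec 0 (fun _ _ ih => (Finset.univ.sup ih) + 1) t

end PTree

/-- The index in `Fin (n_1 + ⋯ + n_k)` corresponding to the pair `(j, i)` with
`i : Fin (n j)` (concatenation of blocks, in order). -/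
def sigmaIdx {k : ℕ} (n : Fin k → ℕ) (j : Fin k) (i : Fin (n j)) : Fin (∑ j', n j') :=
  ⟨(∑ j' ∈ Finset.univ.filter (fun j' => j' < j), n j') + i.1, by
    have hj : j ∉ Finset.univ.filter (fun j' => j' < j) := by simp
    have h2 : (∑ j' ∈ insert j (Finset.univ.filter (fun j' => j' < j)), n j') ≤ ∑ j', n j' :=
      Finset.sum_le_sum_of_subset (Finset.subset_univ _)
    rw [Finset.sum_insert hj] at h2
    have := i.2
    omega⟩

variable (K : Type*) [Field K]

/-- The raw data of an "infinite magmatic bialgebra": an `(n+2)`-ary multilinear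
operation and an `(n+2)`-ary cooperation for every `n`, together with a unit
element and a counit. -/
structure BOps (H : Type*) [AddCommGroup H] [Module K H] where
  /-- the `(n+2)`-ary operations `μ_{n+2}` -/
  mu : ∀ n : ℕ, MultilinearMap K (fun _ : Fin (n + 2) => H) H
  /-- the common unit of the operations -/
  one : H
  /-- the common counit of the cooperations -/
  counit : H →ₗ[K] K
  /-- the `(n+2)`-ary cooperations `Δ_{n+2}` -/
  Delta : ∀ n : ℕ, H →ₗ[K] ⨂[K] _ : Fin (n + 2), H

variable {H : Type*} [AddCommGroup H] [Module K H]

/-- The linear map `x ↦ 1^{⊗i} ⊗ x ⊗ 1^{⊗(n-1-i)}` placing `x` in slot `i` and the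
unit everywhere else. -/
noncomputable def unitSlot (one : H) {n : ℕ} (i : Fin n) :
    H →ₗ[K] ⨂[K] _ : Fin n, H :=
  (PiTensorProduct.tprod K (s := fun _ : Fin n => H)).toLinearMap (fun _ => one) i

/-- `S` is an infinite magmatic algebra: all operations share the unit, and
inserting the unit in any slot of `μ_{n+1}` yields `μ_n` on the remaining
arguments (with `μ_1 = id` as base case). -/
def IsIMAlg (S : BOps K H) : Prop :=
  (∀ (x : Fin 2 → H) (i : Fin 2), x i = S.one → S.mu 0 x = x i.rev) ∧
  (∀ (n : ℕ) (x : Fin (n + 3) → H) (i : Fin (n + 3)), x i = S.one →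
    S.mu (n + 1) x = S.mu n (fun j => x (i.succAbove j)))

/-- Contraction of the `i`-th tensor factor by a linear functional `c`:
`x_1 ⊗ ⋯ ⊗ x_{n+1} ↦ c(x_i) · (x_1 ⊗ ⋯ x̂_i ⋯ ⊗ x_{n+1})`. -/
noncomputable def ctr (c : H →ₗ[K] K) (n : ℕ) (i : Fin (n + 1)) :
    (⨂[K] _ : Fin (n + 1), H) →ₗ[K] ⨂[K] _ : Fin n, H :=
  (TensorProduct.lid K _).toLinearMap ∘ₗ
    (TensorProduct.map
      (c ∘ₗ (PiTensorProduct.subsingletonEquiv (0 : Fin 1)).toLinearMap) LinearMap.id) ∘ₗ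
    (PiTensorProduct.tmulEquiv K H).symm.toLinearMap ∘ₗ
    (PiTensorProduct.reindex K (fun _ => H)
      ((i.cycleRange).trans ((finCongr (Nat.add_comm n 1)).trans
        finSumFinEquiv.symm))).toLinearMap

/-- `S` is a (co-augmented) infinite magmatic coalgebra: the cooperations share the
counit `c`, contracting any slot of `Δ_{n+1}` by `c` yields `Δ_n` (with
`Δ_1 = id` as base case), and the unit is grouplike for all cooperations. -/
def IsIMCoalg (S : BOps K H) : Prop :=
  S.counit S.one = 1 ∧
  (∀ n, S.Delta n S.one = PiTensorProduct.tprod K (fun _ => S.one)) ∧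
  (∀ i : Fin 2,
    (PiTensorProduct.subsingletonEquiv (0 : Fin 1)).toLinearMap ∘ₗ
      ctr K S.counit 1 i ∘ₗ S.Delta 0 = LinearMap.id) ∧
  (∀ (n : ℕ) (i : Fin (n + 3)), ctr K S.counit (n + 2) i ∘ₗ S.Delta (n + 1) = S.Delta n)

open Classical in
/-- The infinite magmatic compatibility relations between the operations and the
cooperations, for arguments in the augmentation ideal (kernel of the counit). -/
def IsCompat (S : BOps K H) : Prop :=
  ∀ (n : ℕ) (xs : Fin (n + 2) → H), (∀ i, S.counit (xs i) = 0) →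
    (S.Delta n (S.mu n xs) =
      PiTensorProduct.tprod K xs + ∑ i : Fin (n + 2), unitSlot K S.one i (S.mu n xs)) ∧
    (∀ m : ℕ, m < n →
      S.Delta m (S.mu n xs) = ∑ i : Fin (m + 2), unitSlot K S.one i (S.mu n xs)) ∧
    (∀ m : ℕ, n < m →
      S.Delta m (S.mu n xs) =
        (∑ i : Fin (m + 2), unitSlot K S.one i (S.mu n xs)) +
        ∑ f ∈ Finset.univ.filter (fun f : Fin (n + 2) → Fin (m + 2) => StrictMono f),
          PiTensorProduct.tprod K
            (fun i => if h : ∃ j, f j = i then xs h.choose else S.one))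

/-- `σ` is an `(p, r)`-shuffle: a permutation of `Fin (p + r)` which is order
preserving on the first `p` and on the last `r` positions. -/
def IsShuffle (p r : ℕ) (σ : Equiv.Perm (Fin (p + r))) : Prop :=
  (∀ i j : Fin p, i < j → σ (Fin.castAdd r i) < σ (Fin.castAdd r j)) ∧
  (∀ i j : Fin r, i < j → σ (Fin.natAdd p i) < σ (Fin.natAdd p j))

/-- Pad a tensor of arity `m` with `r` copies of the unit on the right and then
permute the `m + r` factors by `σ`; this is the operation `y ↦ σ ∘ (y, 1^{⊗r})`. -/
noncomputable def padPerm (one : H) (m r : ℕ) (σ : Equiv.Perm (Fin (m + r))) :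
    (⨂[K] _ : Fin m, H) →ₗ[K] ⨂[K] _ : Fin (m + r), H :=
  (PiTensorProduct.reindex K (fun _ => H) (σ : Fin (m + r) ≃ Fin (m + r))).toLinearMap ∘ₗ
    (PiTensorProduct.reindex K (fun _ => H) finSumFinEquiv).toLinearMap ∘ₗ
    (PiTensorProduct.tmulEquiv K H).toLinearMap ∘ₗ
    ((TensorProduct.mk K _ _).flip (PiTensorProduct.tprod K (fun _ : Fin r => one)))

open Classical in
/-- The reduced cooperations `Δ̄_{n+2}`, defined recursively by
`Δ̄_n(x) = Δ_n(x) - Σ_{i+j=n-1} 1^{⊗i} ⊗ x ⊗ 1^{⊗j}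
  - Σ_{m=2}^{n-1} Σ_{σ ∈ Sh(m, n-m)} σ ∘ (Δ̄_m(x), 1^{⊗(n-m)})`. -/
noncomputable def rDelta (S : BOps K H) : (n : ℕ) → H →ₗ[K] ⨂[K] _ : Fin (n + 2), H
  | n =>
    S.Delta n - (∑ i : Fin (n + 2), unitSlot K S.one i)
      - ∑ m ∈ (Finset.range n).attach,
          ∑ σ ∈ Finset.univ.filter (IsShuffle (m.1 + 2) (n - m.1)),
            (PiTensorProduct.reindex K (fun _ => H)
                (finCongr (show (m.1 + 2) + (n - m.1) = n + 2 by
                  have := Finset.mem_range.mp m.2; omega))).toLinearMap ∘ₗ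
              padPerm K S.one (m.1 + 2) (n - m.1) σ ∘ₗ rDelta S m.1
  termination_by n => n
  decreasing_by exact Finset.mem_range.mp m.2

/-- The primitive part `Prim H = ∩_{n ≥ 2} ker Δ̄_n`. -/
noncomputable def Prim (S : BOps K H) : Submodule K H :=
  ⨅ n : ℕ, LinearMap.ker (rDelta K S n)

/-- The `n`-th tensor power of a submodule `N ⊆ H`, as a submodule of `H^{⊗n}`. -/
noncomputable def tpow (N : Submodule K H) (n : ℕ) :
    Submodule K (⨂[K] _ : Fin n, H) :=
  LinearMap.range (PiTensorProduct.map (fun _ : Fin n => N.subtype))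

/-- The coradical-type filtration: `F_0 = K·1` and
`F_r = ∩_{n ≥ 2} {x | Δ̄_n(x) ∈ (F_{r-1})^{⊗n}}`. -/
noncomputable def Fil (S : BOps K H) : ℕ → Submodule K H
  | 0 => Submodule.span K {S.one}
  | r + 1 => ⨅ n : ℕ, Submodule.comap (rDelta K S n) (tpow K (Fil S r) (n + 2))

/-- The coalgebra is connected: `H = ∪_r F_r`. -/
def Connected (S : BOps K H) : Prop := ∀ x : H, ∃ r, x ∈ Fil K S r

/-- `J = Id - u∘c`, the projection onto the augmentation ideal. -/
noncomputable def Jmap (S : BOps K H) : H →ₗ[K] H :=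
  LinearMap.id - (LinearMap.toSpanSingleton K H S.one) ∘ₗ S.counit

/-- The `(n+2)`-ary convolution power `⋆_{n+2}(J, …, J) = μ_{n+2} ∘ J^{⊗(n+2)} ∘ Δ_{n+2}`. -/
noncomputable def starJ (S : BOps K H) (n : ℕ) : H →ₗ[K] H :=
  PiTensorProduct.lift (S.mu n) ∘ₗ
    PiTensorProduct.map (fun _ => Jmap K S) ∘ₗ S.Delta n

/-- The idempotent `e = J - Σ_{n ≥ 2} ⋆_n ∘ J^{⊗n}`; the sum is locally finite by
connectedness. -/
noncomputable def eMap (S : BOps K H) : H → H :=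
  fun x => Jmap K S x - ∑ᶠ n : ℕ, starJ K S n x

attribute [local instance] Classical.decEq

/-- A model of the free infinite magmatic algebra `Mag^∞(V)` on the vector space
`V`: for each planar tree `t` a multilinear "labelled tree" map
`ι t : V^{leaves t} → M`, such that the operations are given by grafting of
labelled trees and `M` is freely spanned by the unit together with the labelled
trees (i.e. the canonical map `K ⊕ (⊕_t V^{⊗ leaves t}) → M` is bijective). -/
structure MagAlgModel (V M : Type*) [AddCommGroup V] [Module K V]
    [AddCommGroup M] [Module K M] (S : BOps K M) where
  /-- the labelled tree `(t; v_1 ⋯ v_n)` -/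
  ι : (t : PTree) → MultilinearMap K (fun _ : Fin t.leaves => V) M
  /-- the operations are given by grafting of labelled trees -/
  ι_graft : ∀ (k : ℕ) (ts : Fin (k + 2) → PTree) (v : Fin (PTree.graft k ts).leaves → V),
    S.mu k (fun j => ι (ts j) (fun i => v (sigmaIdx (fun j' => (ts j').leaves) j i))) =
      ι (.graft k ts) v
  /-- `M = K·1 ⊕ (⊕_t V^{⊗ leaves t})` via the labelled trees -/
  free : Function.Bijective
    (LinearMap.coprod (LinearMap.toSpanSingleton K M S.one)
      (DFinsupp.lsum ℕ (fun t : PTree => PiTensorProduct.lift (ι t))))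

/-- The canonical inclusion `V = Mag_1 ⊗ V → Mag^∞(V)`, `v ↦ (|; v)`. -/
noncomputable def leafLin {V M : Type*} [AddCommGroup V] [Module K V]
    [AddCommGroup M] [Module K M] {S : BOps K M} (mod : MagAlgModel K V M S) :
    V →ₗ[K] M :=
  PiTensorProduct.lift (mod.ι .leaf) ∘ₗ
    (PiTensorProduct.subsingletonEquiv (R := K) (s := fun _ : Fin 1 => V) (0 : Fin 1)).symm.toLinearMap

open Classical in
/-- A model of the free infinite magmatic bialgebra `Mag^∞(V)`: a model of the free
algebra whose cooperations are the ungraftings of labelled trees. -/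
structure MagModel (V M : Type*) [AddCommGroup V] [Module K V]
    [AddCommGroup M] [Module K M] (S : BOps K M) extends MagAlgModel K V M S where
  counit_one : S.counit S.one = 1
  counit_ι : ∀ (t : PTree) (v : Fin t.leaves → V), S.counit (ι t v) = 0
  delta_one : ∀ n, S.Delta n S.one = PiTensorProduct.tprod K (fun _ => S.one)
  delta_leaf : ∀ (n : ℕ) (v : Fin (PTree.leaf).leaves → V),
    S.Delta n (ι .leaf v) = ∑ i : Fin (n + 2), unitSlot K S.one i (ι .leaf v)
  delta_graft_eq : ∀ (k : ℕ) (ts : Fin (k + 2) → PTree)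
      (v : Fin (PTree.graft k ts).leaves → V),
    S.Delta k (ι (.graft k ts) v) =
      PiTensorProduct.tprod K
        (fun j => ι (ts j) (fun i => v (sigmaIdx (fun j' => (ts j').leaves) j i))) +
      ∑ i : Fin (k + 2), unitSlot K S.one i (ι (.graft k ts) v)
  delta_graft_lt : ∀ (m k : ℕ) (ts : Fin (k + 2) → PTree)
      (v : Fin (PTree.graft k ts).leaves → V), m < k →
    S.Delta m (ι (.graft k ts) v) =
      ∑ i : Fin (m + 2), unitSlot K S.one i (ι (.graft k ts) v)
  delta_graft_gt : ∀ (m k : ℕ) (ts : Fin (k + 2) → PTree)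
      (v : Fin (PTree.graft k ts).leaves → V), k < m →
    S.Delta m (ι (.graft k ts) v) =
      (∑ i : Fin (m + 2), unitSlot K S.one i (ι (.graft k ts) v)) +
      ∑ f ∈ Finset.univ.filter (fun f : Fin (k + 2) → Fin (m + 2) => StrictMono f),
        PiTensorProduct.tprod K (fun i =>
          if h : ∃ j, f j = i then
            ι (ts h.choose) (fun i' => v (sigmaIdx (fun j' => (ts j').leaves) h.choose i'))
          else S.one)

section Helpers

variable {K} {H : Type*} [AddCommGroup H] [Module K H]

lemma unitSlot_apply (one : H) {n : ℕ} (i : Fin n) (x : H) :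
    unitSlot K one i x = PiTensorProduct.tprod K (Function.update (fun _ => one) i x) := rfl

open Classical in
lemma rDelta_apply (S : BOps K H) (n : ℕ) (x : H) :
    rDelta K S n x = S.Delta n x - (∑ i : Fin (n + 2), unitSlot K S.one i x)
      - ∑ m ∈ (Finset.range n).attach,
          ∑ σ ∈ Finset.univ.filter (IsShuffle (m.1 + 2) (n - m.1)),
            (PiTensorProduct.reindex K (fun _ => H)
                (finCongr (show (m.1 + 2) + (n - m.1) = n + 2 by
                  have := Finset.mem_range.mp m.2; omega)))
              (padPerm K S.one (m.1 + 2) (n - m.1) σ (rDelta K S m.1 x)) := by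
  conv_lhs => rw [rDelta]
  simp [LinearMap.sub_apply, LinearMap.sum_apply, LinearMap.comp_apply]

lemma rDelta_eq_zero_of (S : BOps K H) (x : H) : ∀ n : ℕ,
    (∀ m, m ≤ n → S.Delta m x = ∑ i : Fin (m + 2), unitSlot K S.one i x) →
    rDelta K S n x = 0 := by
  intro n
  induction n using Nat.strong_induction_on with
  | _ n ih =>
    intro hx
    rw [rDelta_apply, hx n le_rfl]
    rw [sub_self, zero_sub, neg_eq_zero]
    refine Finset.sum_eq_zero fun m _ => Finset.sum_eq_zero fun σ _ => ?_
    rw [ih m.1 (Finset.mem_range.mp m.2)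
      (fun m' hm' => hx m' (hm'.trans (Finset.mem_range.mp m.2).le))]
    simp

lemma padPerm_tprod (one : H) (m r : ℕ) (σ : Equiv.Perm (Fin (m + r))) (a : Fin m → H) :
    padPerm K one m r σ (PiTensorProduct.tprod K a) =
      PiTensorProduct.tprod K (fun i =>
        Sum.elim a (fun _ : Fin r => one) (finSumFinEquiv.symm (σ.symm i))) := by
  simp only [padPerm, LinearMap.comp_apply, LinearMap.flip_apply, TensorProduct.mk_apply,
    LinearEquiv.coe_coe, PiTensorProduct.tmulEquiv_apply, PiTensorProduct.reindex_tprod]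

open Classical in
lemma comp_card {p r : ℕ} (f : Fin p → Fin (p + r)) (hf : Function.Injective f) :
    (Finset.univ \ Finset.image f Finset.univ).card = r := by
  rw [Finset.card_sdiff_of_subset (Finset.subset_univ _), Finset.card_image_of_injective _ hf]
  simp

open Classical in
/-- The increasing enumeration of the complement of the range of an injective
`f : Fin p → Fin (p + r)`. -/
noncomputable def compEmb {p r : ℕ} (f : Fin p → Fin (p + r)) (hf : Function.Injective f) :
    Fin r ↪o Fin (p + r) :=
  (Finset.univ \ Finset.image f Finset.univ).orderEmbOfFin (comp_card f hf)

open Classical in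
lemma compEmb_not_mem {p r : ℕ} (f : Fin p → Fin (p + r)) (hf : Function.Injective f)
    (j : Fin r) : compEmb f hf j ∉ Finset.image f Finset.univ := by
  have := Finset.orderEmbOfFin_mem _ (comp_card f hf) j
  exact (Finset.mem_sdiff.mp this).2

open Classical in
/-- The shuffle associated to a strictly monotone map. -/
noncomputable def monoToPerm {p r : ℕ} (f : Fin p → Fin (p + r)) (hf : StrictMono f) :
    Equiv.Perm (Fin (p + r)) :=
  finSumFinEquiv.symm.trans (Equiv.ofBijective (Sum.elim f (compEmb f hf.injective))
    ⟨by
      rintro (j1 | j1) (j2 | j2) h <;> simp only [Sum.elim_inl, Sum.elim_inr] at h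
      · exact congrArg Sum.inl (hf.injective h)
      · exact absurd (h ▸ Finset.mem_image_of_mem f (Finset.mem_univ j1))
          (compEmb_not_mem f hf.injective j2)
      · exact absurd (h.symm ▸ Finset.mem_image_of_mem f (Finset.mem_univ j2))
          (compEmb_not_mem f hf.injective j1)
      · exact congrArg Sum.inr ((compEmb f hf.injective).injective h),
     by
      intro i
      by_cases hi : i ∈ Finset.image f Finset.univ
      · obtain ⟨j, _, hj⟩ := Finset.mem_image.mp hi
        exact ⟨Sum.inl j, hj⟩
      · have hmem : i ∈ Finset.univ \ Finset.image f Finset.univ :=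
          Finset.mem_sdiff.mpr ⟨Finset.mem_univ _, hi⟩
        have hr := Finset.range_orderEmbOfFin (Finset.univ \ Finset.image f Finset.univ)
          (comp_card f hf.injective)
        rw [← Finset.mem_coe, ← hr] at hmem
        obtain ⟨j, hj⟩ := hmem
        exact ⟨Sum.inr j, hj⟩⟩)

lemma monoToPerm_castAdd {p r : ℕ} (f : Fin p → Fin (p + r)) (hf : StrictMono f) (j : Fin p) :
    monoToPerm f hf (Fin.castAdd r j) = f j := by
  simp [monoToPerm, Equiv.ofBijective, finSumFinEquiv_symm_apply_castAdd]

lemma monoToPerm_natAdd {p r : ℕ} (f : Fin p → Fin (p + r)) (hf : StrictMono f) (j : Fin r) :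
    monoToPerm f hf (Fin.natAdd p j) = compEmb f hf.injective j := by
  simp [monoToPerm, Equiv.ofBijective, finSumFinEquiv_symm_apply_natAdd]

lemma isShuffle_monoToPerm {p r : ℕ} (f : Fin p → Fin (p + r)) (hf : StrictMono f) :
    IsShuffle p r (monoToPerm f hf) := by
  constructor
  · intro i j hij
    rw [monoToPerm_castAdd, monoToPerm_castAdd]
    exact hf hij
  · intro i j hij
    rw [monoToPerm_natAdd, monoToPerm_natAdd]
    exact (compEmb f hf.injective).strictMono hij

open Classical in
lemma monoToPerm_shuffle_eq {p r : ℕ} (σ : Equiv.Perm (Fin (p + r))) (hσ : IsShuffle p r σ)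
    (hf : StrictMono (fun j => σ (Fin.castAdd r j))) :
    monoToPerm (fun j => σ (Fin.castAdd r j)) hf = σ := by
  have hcard := comp_card (fun j => σ (Fin.castAdd r j)) hf.injective
  have hgs : (fun j : Fin r => σ (Fin.natAdd p j)) =
      (Finset.univ \ Finset.image (fun j => σ (Fin.castAdd r j)) Finset.univ).orderEmbOfFin
        hcard := by
    refine Finset.orderEmbOfFin_unique hcard (fun j => ?_) (fun i j hij => hσ.2 i j hij)
    refine Finset.mem_sdiff.mpr ⟨Finset.mem_univ _, fun hmem => ?_⟩
    obtain ⟨j', _, hj'⟩ := Finset.mem_image.mp hmem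
    have := σ.injective hj'
    have h1 : (Fin.castAdd r j' : ℕ) = j'.1 := rfl
    have h2 : (Fin.natAdd p j : ℕ) = p + j.1 := rfl
    have := congrArg Fin.val this
    omega
  ext i
  induction i using Fin.addCases with
  | left j => rw [monoToPerm_castAdd]
  | right j =>
    rw [monoToPerm_natAdd]
    have : compEmb (fun j => σ (Fin.castAdd r j)) hf.injective j =
        (Finset.univ \ Finset.image (fun j => σ (Fin.castAdd r j)) Finset.univ).orderEmbOfFin
          hcard j := rfl
    rw [this, ← hgs]

open Classical in
lemma strictMono_sum_eq_shuffle_sum (one : H) (p r N : ℕ) (hc : p + r = N) (a : Fin p → H) :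
    ∑ f ∈ Finset.univ.filter (fun f : Fin p → Fin N => StrictMono f),
      (PiTensorProduct.tprod K) (fun i => if h : ∃ j, f j = i then a h.choose else one)
    = ∑ σ ∈ Finset.univ.filter (IsShuffle p r),
        (PiTensorProduct.reindex K (fun _ => H) (finCongr hc))
          (padPerm K one p r σ ((PiTensorProduct.tprod K) a)) := by
  subst hc
  simp only [finCongr_refl, PiTensorProduct.reindex_refl, LinearEquiv.refl_apply,
    padPerm_tprod]
  refine Finset.sum_bij' (i := fun f hf => monoToPerm f (Finset.mem_filter.mp hf).2)
    (j := fun σ _ => fun j => σ (Fin.castAdd r j)) ?_ ?_ ?_ ?_ ?_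
  · intro f hf
    exact Finset.mem_filter.mpr ⟨Finset.mem_univ _, isShuffle_monoToPerm f _⟩
  · intro σ hσ
    refine Finset.mem_filter.mpr ⟨Finset.mem_univ _, fun i j hij =>
      (Finset.mem_filter.mp hσ).2.1 i j hij⟩
  · intro f hf
    funext j
    exact monoToPerm_castAdd f _ j
  · intro σ hσ
    exact monoToPerm_shuffle_eq σ (Finset.mem_filter.mp hσ).2 _
  · intro f hf
    have hfm : StrictMono f := (Finset.mem_filter.mp hf).2
    congr 1
    funext i
    have hmi : (monoToPerm f hfm) (finSumFinEquiv
        (finSumFinEquiv.symm ((monoToPerm f hfm).symm i))) = i := by simp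
    rcases hs : finSumFinEquiv.symm ((monoToPerm f hfm).symm i) with j | j
    · rw [hs, finSumFinEquiv_apply_left, monoToPerm_castAdd] at hmi
      have hex : ∃ j', f j' = i := ⟨j, hmi⟩
      rw [dif_pos hex, Sum.elim_inl]
      exact congrArg a (hfm.injective (hex.choose_spec.trans hmi.symm))
    · rw [dif_neg, Sum.elim_inr]
      rintro ⟨j', hj'⟩
      have : (monoToPerm f hfm) (Fin.castAdd r j') = i := by
        rw [monoToPerm_castAdd]; exact hj'
      have h2 : (monoToPerm f hfm).symm i = Fin.castAdd r j' := by
        rw [← this, Equiv.symm_apply_apply]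
      rw [h2, finSumFinEquiv_symm_apply_castAdd] at hs
      exact Sum.inl_ne_inr hs

end Helpers

section ModelHelpers

variable {K} {V M : Type*} [AddCommGroup V] [Module K V] [AddCommGroup M] [Module K M]
  {S : BOps K M} (mod : MagModel K V M S)

lemma rDelta_ι_leaf (n : ℕ) (v : Fin (PTree.leaf).leaves → V) :
    rDelta K S n (mod.ι .leaf v) = 0 :=
  rDelta_eq_zero_of S _ n fun m _ => mod.delta_leaf m v

lemma rDelta_ι_graft_lt (m k : ℕ) (ts : Fin (k + 2) → PTree)
    (v : Fin (PTree.graft k ts).leaves → V) (h : m < k) :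
    rDelta K S m (mod.ι (.graft k ts) v) = 0 :=
  rDelta_eq_zero_of S _ m fun m' hm' => mod.delta_graft_lt m' k ts v (lt_of_le_of_lt hm' h)

lemma rDelta_ι_graft_self (k : ℕ) (ts : Fin (k + 2) → PTree)
    (v : Fin (PTree.graft k ts).leaves → V) :
    rDelta K S k (mod.ι (.graft k ts) v) =
      PiTensorProduct.tprod K
        (fun j => mod.ι (ts j) (fun i => v (sigmaIdx (fun j' => (ts j').leaves) j i))) := by
  rw [rDelta_apply, mod.delta_graft_eq k ts v,
    Finset.sum_eq_zero (fun m _ => Finset.sum_eq_zero fun σ _ => by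
      rw [rDelta_ι_graft_lt mod m.1 k ts v (Finset.mem_range.mp m.2)]; simp)]
  abel

lemma rDelta_ι_graft_gt (k : ℕ) (ts : Fin (k + 2) → PTree)
    (v : Fin (PTree.graft k ts).leaves → V) :
    ∀ n, k < n → rDelta K S n (mod.ι (.graft k ts) v) = 0 := by
  intro n
  induction n using Nat.strong_induction_on with
  | _ n ih =>
    intro hkn
    rw [rDelta_apply, mod.delta_graft_gt n k ts v hkn,
      Finset.sum_eq_single_of_mem (⟨k, Finset.mem_range.mpr hkn⟩ : {m // m ∈ Finset.range n})
        (Finset.mem_attach _ _) (fun m _ hm => Finset.sum_eq_zero fun σ _ => by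
          rcases Nat.lt_or_ge m.1 k with h | h
          · rw [rDelta_ι_graft_lt mod m.1 k ts v h]; simp
          · have hk : k < m.1 := lt_of_le_of_ne h (fun he => hm (Subtype.ext he.symm))
            rw [ih m.1 (Finset.mem_range.mp m.2) hk]; simp)]
    rw [rDelta_ι_graft_self mod k ts v,
      ← strictMono_sum_eq_shuffle_sum S.one (k + 2) (n - k) (n + 2) (by omega)
        (fun j => mod.ι (ts j) (fun i => v (sigmaIdx (fun j' => (ts j').leaves) j i)))]
    abel

lemma rDelta_lift_leaf (n : ℕ) (w : ⨂[K] _ : Fin (PTree.leaf.leaves), V) :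
    rDelta K S n (PiTensorProduct.lift (mod.ι .leaf) w) = 0 := by
  have h : (rDelta K S n) ∘ₗ (PiTensorProduct.lift (mod.ι .leaf)) = 0 := by
    apply PiTensorProduct.ext
    ext v
    simp only [LinearMap.compMultilinearMap_apply, LinearMap.comp_apply,
      PiTensorProduct.lift.tprod, LinearMap.zero_apply, LinearMap.zero_compMultilinearMap,
      MultilinearMap.zero_apply]
    exact rDelta_ι_leaf mod n v
  exact LinearMap.congr_fun h w

lemma rDelta_lift_graft_ne (m k : ℕ) (ts : Fin (k + 2) → PTree) (hne : m ≠ k)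
    (w : ⨂[K] _ : Fin ((PTree.graft k ts).leaves), V) :
    rDelta K S m (PiTensorProduct.lift (mod.ι (.graft k ts)) w) = 0 := by
  have h : (rDelta K S m) ∘ₗ (PiTensorProduct.lift (mod.ι (.graft k ts))) = 0 := by
    apply PiTensorProduct.ext
    ext v
    simp only [LinearMap.compMultilinearMap_apply, LinearMap.comp_apply,
      PiTensorProduct.lift.tprod, LinearMap.zero_apply, LinearMap.zero_compMultilinearMap,
      MultilinearMap.zero_apply]
    rcases Nat.lt_or_ge m k with h | h
    · exact rDelta_ι_graft_lt mod m k ts v h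
    · exact rDelta_ι_graft_gt mod k ts v m (lt_of_le_of_ne h (Ne.symm hne))
  exact LinearMap.congr_fun h w

lemma psi_rDelta_lift_graft (k : ℕ) (ts : Fin (k + 2) → PTree)
    (w : ⨂[K] _ : Fin ((PTree.graft k ts).leaves), V) :
    PiTensorProduct.lift (S.mu k)
        (rDelta K S k (PiTensorProduct.lift (mod.ι (.graft k ts)) w)) =
      PiTensorProduct.lift (mod.ι (.graft k ts)) w := by
  have h : (PiTensorProduct.lift (S.mu k)) ∘ₗ (rDelta K S k) ∘ₗ
      (PiTensorProduct.lift (mod.ι (.graft k ts))) =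
      PiTensorProduct.lift (mod.ι (.graft k ts)) := by
    apply PiTensorProduct.ext
    ext v
    simp only [LinearMap.compMultilinearMap_apply, LinearMap.comp_apply,
      PiTensorProduct.lift.tprod]
    rw [rDelta_ι_graft_self mod k ts v, PiTensorProduct.lift.tprod]
    exact mod.ι_graft k ts v
  exact LinearMap.congr_fun h w

lemma counit_rDelta_lift (t : PTree) (w : ⨂[K] _ : Fin t.leaves, V) :
    PiTensorProduct.lift ((MultilinearMap.mkPiAlgebra K (Fin 2) K).compLinearMap
      (fun _ => S.counit)) (rDelta K S 0 (PiTensorProduct.lift (mod.ι t) w)) = 0 := by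
  cases t with
  | leaf => rw [rDelta_lift_leaf mod 0 w]; simp
  | graft k ts =>
    cases k with
    | succ k => rw [rDelta_lift_graft_ne mod 0 (k + 1) ts (by omega) w]; simp
    | zero =>
      have h : (PiTensorProduct.lift ((MultilinearMap.mkPiAlgebra K (Fin 2) K).compLinearMap
          (fun _ => S.counit))) ∘ₗ (rDelta K S 0) ∘ₗ
          (PiTensorProduct.lift (mod.ι (.graft 0 ts))) = 0 := by
        apply PiTensorProduct.ext
        ext v
        simp only [LinearMap.compMultilinearMap_apply, LinearMap.comp_apply,
          PiTensorProduct.lift.tprod, LinearMap.zero_apply, LinearMap.zero_compMultilinearMap,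
          MultilinearMap.zero_apply]
        rw [rDelta_ι_graft_self mod 0 ts v, PiTensorProduct.lift.tprod]
        simp [MultilinearMap.compLinearMap_apply, MultilinearMap.mkPiAlgebra_apply,
          mod.counit_ι]
      exact LinearMap.congr_fun h w

lemma counit_rDelta_one (h1 : S.Delta 0 S.one = PiTensorProduct.tprod K (fun _ => S.one))
    (h2 : S.counit S.one = 1) :
    PiTensorProduct.lift ((MultilinearMap.mkPiAlgebra K (Fin 2) K).compLinearMap
      (fun _ => S.counit)) (rDelta K S 0 S.one) = -1 := by
  rw [rDelta_apply, h1]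
  simp [Fin.sum_univ_two, unitSlot_apply, Function.update_eq_self,
    MultilinearMap.compLinearMap_apply, MultilinearMap.mkPiAlgebra_apply, h2]
  norm_num

end ModelHelpers

/-- The primitive part of the free infinite magmatic algebra
`Mag^∞(V)` is exactly `V = Mag_1 ⊗ V`, the span of single-leaf labelled trees. -/
theorem prim_magModel_eq (V M : Type*) [AddCommGroup V] [Module K V]
    [AddCommGroup M] [Module K M] (S : BOps K M) (mod : MagModel K V M S) :
    Prim K S = LinearMap.range (leafLin K mod.toMagAlgModel) := by
  classical
  apply le_antisymm
  · intro x hx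
    have hxn : ∀ n, rDelta K S n x = 0 := fun n =>
      LinearMap.mem_ker.mp ((Submodule.mem_iInf _).mp hx n)
    obtain ⟨⟨c, d⟩, hcd⟩ := mod.free.2 x
    simp only [LinearMap.coprod_apply, LinearMap.toSpanSingleton_apply] at hcd
    have hexp : ∀ (d' : Π₀ t : PTree, ⨂[K] _ : Fin t.leaves, V),
        DFinsupp.lsum ℕ (fun t => PiTensorProduct.lift (mod.ι t)) d' =
          ∑ t ∈ d'.support, PiTensorProduct.lift (mod.ι t) (d' t) := by
      intro d'
      rw [DFinsupp.lsum_apply_apply, DFinsupp.sumAddHom_apply]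
      rfl
    have hc0 : c = 0 := by
      have h0 : PiTensorProduct.lift ((MultilinearMap.mkPiAlgebra K (Fin 2) K).compLinearMap
          (fun _ => S.counit)) (rDelta K S 0 x) = 0 := by rw [hxn 0]; simp
      rw [← hcd, hexp d] at h0
      simp only [map_add, map_smul, map_sum] at h0
      rw [counit_rDelta_one (mod.delta_one 0) mod.counit_one,
        Finset.sum_eq_zero (fun t _ => counit_rDelta_lift mod t (d t))] at h0
      simpa using h0
    have hx' : DFinsupp.lsum ℕ (fun t => PiTensorProduct.lift (mod.ι t)) d = x := by
      rw [← hcd, hc0]; simp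
    have hd0 : ∀ k (ts : Fin (k + 2) → PTree), d (PTree.graft k ts) = 0 := by
      intro k ts0
      set P : PTree → Prop := fun t => ∃ ts', t = PTree.graft k ts' with hP
      have hsum : (DFinsupp.lsum ℕ (fun t => PiTensorProduct.lift (mod.ι t)))
          (DFinsupp.filter P d) = 0 := by
        have e1 : ∀ t ∈ Finset.filter P d.support,
            PiTensorProduct.lift (mod.ι t) ((DFinsupp.filter P d) t) =
              PiTensorProduct.lift (S.mu k)
                (rDelta K S k (PiTensorProduct.lift (mod.ι t) (d t))) := by
          intro t ht
          obtain ⟨ts', rfl⟩ := (Finset.mem_filter.mp ht).2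
          rw [DFinsupp.filter_apply_pos _ ⟨ts', rfl⟩]
          exact (psi_rDelta_lift_graft mod k ts' _).symm
        rw [hexp, DFinsupp.support_filter, Finset.sum_congr rfl e1,
          Finset.sum_filter_of_ne (fun t ht hne => ?_)]
        · rw [← map_sum, ← map_sum, ← hexp, hx', hxn k]
          simp
        · by_contra hPt
          apply hne
          cases t with
          | leaf => rw [rDelta_lift_leaf]; simp
          | graft k' ts'' =>
            have hkk : k' ≠ k := fun he => hPt (by subst he; exact ⟨ts'', rfl⟩)
            rw [rDelta_lift_graft_ne mod k k' ts'' (Ne.symm hkk)]; simp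
      have h00 := mod.free.1 (a₁ := (0, DFinsupp.filter P d)) (a₂ := (0, 0)) (by
        simp only [LinearMap.coprod_apply, LinearMap.toSpanSingleton_apply, hsum]
        simp)
      have hfd : DFinsupp.filter P d = 0 := congrArg Prod.snd h00
      calc d (PTree.graft k ts0) = (DFinsupp.filter P d) (PTree.graft k ts0) :=
            (DFinsupp.filter_apply_pos _ ⟨ts0, rfl⟩).symm
        _ = 0 := by rw [hfd]; rfl
    have hds : d = DFinsupp.single PTree.leaf (d PTree.leaf) := by
      ext t
      cases t with
      | leaf => simp
      | graft k ts =>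
        rw [hd0 k ts, DFinsupp.single_eq_of_ne (fun h => PTree.noConfusion h)]
    refine ⟨(PiTensorProduct.subsingletonEquiv (R := K) (s := fun _ : Fin 1 => V) (0 : Fin 1)) (d PTree.leaf), ?_⟩
    unfold leafLin
    rw [LinearMap.comp_apply, LinearEquiv.coe_coe, LinearEquiv.symm_apply_apply,
      ← hx', hds, DFinsupp.lsum_single, DFinsupp.single_eq_same]
  · rintro x ⟨v, rfl⟩
    refine (Submodule.mem_iInf _).mpr fun n => LinearMap.mem_ker.mpr ?_
    unfold leafLin
    rw [LinearMap.comp_apply]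
    exact rDelta_lift_leaf mod n _

end
end

section
/- On the free infinite magmatic bialgebra Mag^∞(V), the idempotent e := J - Σ_{n≥2} ⋆_n ∘ J^{⊗n} equals the identity on the degree-one component Mag_1 ⊗ V = V (single-leaf labelled trees) and vanishes on all components Mag_n ⊗ V^{⊗n} with n ≥ 2 and on the unit. -/
open scoped TensorProduct PiTensorProduct

noncomputable section

variable (K : Type*) [Field K]

variable {H : Type*} [AddCommGroup H] [Module K H]

attribute [local instance] Classical.decEq

section MyHelpers

variable {K : Type*} [Field K] {H : Type*} [AddCommGroup H] [Module K H]

lemma my_Jmap_apply (S : BOps K H) (x : H) :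
    Jmap K S x = x - S.counit x • S.one := by
  simp [Jmap, LinearMap.toSpanSingleton_apply]

lemma my_Jmap_one (S : BOps K H) (h : S.counit S.one = 1) : Jmap K S S.one = 0 := by
  simp [my_Jmap_apply, h]

lemma my_Jmap_counit_zero (S : BOps K H) {x : H} (h : S.counit x = 0) :
    Jmap K S x = x := by simp [my_Jmap_apply, h]

lemma my_map_tprod_zero {n : ℕ} (g : Fin n → H) (j : Fin n)
    (S : BOps K H) (h : Jmap K S (g j) = 0) :
    PiTensorProduct.map (fun _ : Fin n => Jmap K S) (PiTensorProduct.tprod K g) = 0 := by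
  rw [PiTensorProduct.map_tprod]
  exact MultilinearMap.map_coord_zero _ j h

lemma my_map_J_unitSlot (S : BOps K H) (h : S.counit S.one = 1) {n : ℕ}
    (i : Fin (n + 2)) (x : H) :
    PiTensorProduct.map (fun _ : Fin (n + 2) => Jmap K S) (unitSlot K S.one i x) = 0 := by
  have hone : (1 : Fin (n + 2)) ≠ 0 := Fin.ne_of_val_ne (by simp)
  set j : Fin (n + 2) := if i = 0 then 1 else 0 with hj
  have hji : j ≠ i := by
    rcases eq_or_ne i 0 with h0 | h0
    · simpa [hj, h0] using hone
    · simpa [hj, h0] using Ne.symm h0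
  refine my_map_tprod_zero _ j S ?_
  show Jmap K S (Function.update (fun _ => S.one) i x j) = 0
  rw [Function.update_of_ne hji]
  exact my_Jmap_one S h

lemma my_starJ_apply (S : BOps K H) (n : ℕ) (x : H) :
    starJ K S n x = PiTensorProduct.lift (S.mu n)
      (PiTensorProduct.map (fun _ => Jmap K S) (S.Delta n x)) := rfl

lemma my_starJ_of_unitSum (S : BOps K H) (h : S.counit S.one = 1) (n : ℕ) (x : H)
    (hd : S.Delta n x = ∑ i : Fin (n + 2), unitSlot K S.one i x) :
    starJ K S n x = 0 := by
  rw [my_starJ_apply, hd, map_sum]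
  have : ∀ i : Fin (n + 2),
      PiTensorProduct.map (fun _ : Fin (n + 2) => Jmap K S) (unitSlot K S.one i x) = 0 :=
    fun i => my_map_J_unitSlot S h i x
  simp [this]

end MyHelpers

/-- On the free infinite magmatic bialgebra `Mag^∞(V)`, the
idempotent `e = J - Σ_{n≥2} ⋆_n ∘ J^{⊗n}` is the identity on the degree-one
component `Mag_1 ⊗ V = V` (single-leaf labelled trees) and vanishes on all
components `Mag_n ⊗ V^{⊗n}` with `n ≥ 2` (labelled grafted trees) and on the
unit. -/
theorem eMap_magModel (V M : Type*) [AddCommGroup V] [Module K V]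
    [AddCommGroup M] [Module K M] (S : BOps K M) (mod : MagModel K V M S) :
    (∀ v : V, eMap K S (leafLin K mod.toMagAlgModel v) = leafLin K mod.toMagAlgModel v) ∧
    (∀ (k : ℕ) (ts : Fin (k + 2) → PTree) (v : Fin (PTree.graft k ts).leaves → V),
      eMap K S (mod.ι (.graft k ts) v) = 0) ∧
    eMap K S S.one = 0 := by
  have h1 := mod.counit_one
  constructor
  · intro v
    have hleaf : leafLin K mod.toMagAlgModel v = mod.ι .leaf (fun _ => v) := by
      simp [leafLin, PiTensorProduct.subsingletonEquiv_symm_apply]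
      congr 1; funext i; rw [Subsingleton.elim i 0]; simp [Function.update]
    have hc : S.counit (leafLin K mod.toMagAlgModel v) = 0 := by
      rw [hleaf]; exact mod.counit_ι _ _
    have hs : ∀ n, starJ K S n (leafLin K mod.toMagAlgModel v) = 0 := by
      intro n
      refine my_starJ_of_unitSum S h1 n _ ?_
      rw [hleaf]
      exact mod.delta_leaf n _
    simp [eMap, my_Jmap_counit_zero S hc, finsum_eq_zero_of_forall_eq_zero hs]
  constructor
  · intro k ts v
    set x := mod.ι (.graft k ts) v with hx
    have hc : S.counit x = 0 := mod.counit_ι _ _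
    have hk : starJ K S k x = x := by
      rw [my_starJ_apply, mod.delta_graft_eq k ts v, map_add, map_sum, map_add, map_sum]
      have hz : ∀ i : Fin (k + 2),
          PiTensorProduct.map (fun _ : Fin (k + 2) => Jmap K S) (unitSlot K S.one i x) = 0 :=
        fun i => my_map_J_unitSlot S h1 i x
      rw [← hx]
      simp only [hz, map_zero, Finset.sum_const_zero, add_zero]
      rw [PiTensorProduct.map_tprod]
      have hxs : (fun j => Jmap K S
            (mod.ι (ts j) fun i => v (sigmaIdx (fun j' => (ts j').leaves) j i))) =
          (fun j => mod.ι (ts j) fun i => v (sigmaIdx (fun j' => (ts j').leaves) j i)) :=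
        funext fun j => my_Jmap_counit_zero S (mod.counit_ι _ _)
      rw [hxs, PiTensorProduct.lift.tprod, mod.ι_graft k ts v]
    have hne : ∀ n, n ≠ k → starJ K S n x = 0 := by
      intro n hn
      rcases lt_or_gt_of_ne hn with hlt | hgt
      · exact my_starJ_of_unitSum S h1 n x (mod.delta_graft_lt n k ts v hlt)
      · rw [my_starJ_apply, mod.delta_graft_gt n k ts v hgt, map_add, map_sum, map_sum,
          map_add, map_sum, map_sum]
        have hz : ∀ i : Fin (n + 2),
            PiTensorProduct.map (fun _ : Fin (n + 2) => Jmap K S) (unitSlot K S.one i x) = 0 :=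
          fun i => my_map_J_unitSlot S h1 i x
        rw [← hx]
        simp only [hz, map_zero, Finset.sum_const_zero, zero_add]
        refine Finset.sum_eq_zero fun f hf => ?_
        have hns : ¬ Function.Surjective f := by
          intro hs
          have := Fintype.card_le_of_surjective f hs
          simp only [Fintype.card_fin] at this
          omega
        rw [Function.Surjective] at hns
        push_neg at hns
        obtain ⟨i, hi⟩ := hns
        have hdite : (if h : ∃ j, f j = i then
            mod.ι (ts h.choose)
              (fun i' => v (sigmaIdx (fun j' => (ts j').leaves) h.choose i'))
            else S.one) = S.one := by
          rw [dif_neg]; push_neg; exact hi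
        rw [my_map_tprod_zero _ i S (by rw [hdite]; exact my_Jmap_one S h1), map_zero]
    have hfs : ∑ᶠ n, starJ K S n x = x := by
      rw [finsum_eq_single _ k hne, hk]
    simp [eMap, my_Jmap_counit_zero S hc, hfs]
  · have hs : ∀ n, starJ K S n S.one = 0 := by
      intro n
      rw [my_starJ_apply, mod.delta_one n,
        my_map_tprod_zero _ 0 S (my_Jmap_one S h1), map_zero]
    simp [eMap, my_Jmap_one S h1, finsum_eq_zero_of_forall_eq_zero hs]

end
end
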